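/- arXiv:2410.17722 — 7 statements merged into one kernel-verified Lean document; each statement's English description precedes it below -/
import Mathlib

section
/- The Farey metric d_F is an ultrametric on [0,1]: for all α, β, γ ∈ [0,1], d_F(α,β) ≤ max{d_F(α,γ), d_F(γ,β)}. -/
/-- The set of `m`-Farey numbers viewed inside `ℝ`: rationals in `[0,1]` with
(reduced) denominator at most `m`. -/
def FareyRe (m : ℕ) : Set ℝ :=
  {x | ∃ q : ℚ, (q : ℝ) = x ∧ 0 ≤ q ∧ q ≤ 1 ∧ q.den ≤ m}

/-- `s = r^*` is the upper Farey neighbor of `r` in `F_m`: the smallest element of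
`F_m` strictly above `r`. -/
def IsUpperNbr (m : ℕ) (r s : ℝ) : Prop :=
  IsLeast {t | t ∈ FareyRe m ∧ r < t} s

/-- The Farey metric on `[0,1]`. -/
noncomputable def dF (α β : ℝ) : ℝ :=
  if α = β then 0
  else if α = 0 ∨ α = 1 ∨ β = 0 ∨ β = 1 then 1
  else sInf {d : ℝ | ∃ m : ℕ, 1 ≤ m ∧ d = 1 / (m + 1) ∧
    ∃ r s : ℝ, r ∈ FareyRe m ∧ IsUpperNbr m r s ∧
      α ∈ Set.Ioo r s ∧ β ∈ Set.Ioo r s}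

namespace FareyAux

/-- The set whose infimum defines `dF` in the interior case. -/
def Sset (α β : ℝ) : Set ℝ :=
  {d : ℝ | ∃ m : ℕ, 1 ≤ m ∧ d = 1 / (m + 1) ∧
    ∃ r s : ℝ, r ∈ FareyRe m ∧ IsUpperNbr m r s ∧
      α ∈ Set.Ioo r s ∧ β ∈ Set.Ioo r s}

lemma fareyRe_mono {m m' : ℕ} (h : m ≤ m') : FareyRe m ⊆ FareyRe m' := by
  rintro x ⟨q, hq, h0, h1, hd⟩
  exact ⟨q, hq, h0, h1, hd.trans h⟩

lemma zero_mem_fareyRe {m : ℕ} (hm : 1 ≤ m) : (0 : ℝ) ∈ FareyRe m := by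
  refine ⟨0, by norm_num, le_refl _, by norm_num, ?_⟩
  simpa using hm

lemma one_mem_fareyRe {m : ℕ} (hm : 1 ≤ m) : (1 : ℝ) ∈ FareyRe m := by
  refine ⟨1, by norm_num, by norm_num, le_refl _, ?_⟩
  simpa using hm

lemma mem_fareyRe_nonneg {m : ℕ} {x : ℝ} (h : x ∈ FareyRe m) : 0 ≤ x := by
  obtain ⟨q, hq, h0, _, _⟩ := h
  rw [← hq]; exact_mod_cast h0

lemma isUpperNbr_one : IsUpperNbr 1 0 1 := by
  constructor
  · exact ⟨one_mem_fareyRe le_rfl, by norm_num⟩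
  · rintro t ⟨⟨q, hq, h0, h1, hd⟩, ht⟩
    have hden : q.den = 1 := le_antisymm hd q.pos
    have hq0 : (0 : ℚ) < q := by
      rw [← hq] at ht; exact_mod_cast ht
    have : (1 : ℚ) ≤ q := by
      have hnum : (q.num : ℚ) = q := by
        rw [← Rat.num_div_den q, hden]; simp
      have : 0 < q.num := Rat.num_pos.mpr hq0
      rw [← hnum]; exact_mod_cast this
    rw [← hq]; exact_mod_cast this

lemma dF_nonneg (α β : ℝ) : 0 ≤ dF α β := by
  unfold dF
  split_ifs
  · exact le_rfl
  · norm_num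
  · apply Real.sInf_nonneg
    rintro x ⟨m, hm, rfl, -⟩
    positivity

lemma bddBelow_Sset (α β : ℝ) : BddBelow (Sset α β) :=
  ⟨0, by rintro x ⟨m, hm, rfl, -⟩; positivity⟩

lemma dF_eq_sInf {α β : ℝ} (hα : α ∈ Set.Ioo (0 : ℝ) 1) (hβ : β ∈ Set.Ioo (0 : ℝ) 1)
    (hne : α ≠ β) : dF α β = sInf (Sset α β) := by
  unfold dF
  rw [if_neg hne, if_neg]
  · rfl
  · push_neg
    exact ⟨ne_of_gt hα.1, ne_of_lt hα.2, ne_of_gt hβ.1, ne_of_lt hβ.2⟩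

lemma half_mem_Sset {α β : ℝ} (hα : α ∈ Set.Ioo (0 : ℝ) 1) (hβ : β ∈ Set.Ioo (0 : ℝ) 1) :
    (1 / 2 : ℝ) ∈ Sset α β := by
  refine ⟨1, le_rfl, by norm_num, 0, 1, zero_mem_fareyRe le_rfl, isUpperNbr_one, hα, hβ⟩

/-- The gap between a Farey number and its upper neighbor is at most `1/m`. -/
lemma gap {m : ℕ} (hm : 1 ≤ m) {r s : ℝ} (hr0 : 0 ≤ r) (hr1 : r < 1)
    (h : IsUpperNbr m r s) : s ≤ r + 1 / m := by
  have hmR : (0 : ℝ) < (m : ℝ) := by exact_mod_cast hm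
  set k : ℤ := ⌊r * m⌋ with hk
  have hk0 : 0 ≤ k := Int.floor_nonneg.mpr (by positivity)
  have hkm : k + 1 ≤ (m : ℤ) := by
    have : r * m < m := by nlinarith
    have := Int.floor_lt.mpr (by exact_mod_cast this : r * m < ((m : ℤ) : ℝ))
    omega
  set q : ℚ := ((k + 1 : ℤ) : ℚ) / (m : ℚ) with hqdef
  have hqR : (q : ℝ) = ((k : ℝ) + 1) / m := by
    push_cast [hqdef]; ring
  have htF : ((q : ℝ)) ∈ FareyRe m := by
    refine ⟨q, rfl, ?_, ?_, ?_⟩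
    · apply div_nonneg
      · exact_mod_cast (by omega : (0 : ℤ) ≤ k + 1)
      · exact_mod_cast hmR.le
    · rw [div_le_one (by exact_mod_cast hmR)]
      exact_mod_cast hkm
    · have hdvd : ((q.den : ℤ)) ∣ (m : ℤ) := by
        have h1 := Rat.den_dvd (k + 1) (m : ℤ)
        have heq : Rat.divInt (k + 1) (m : ℤ) = q := by
          rw [Rat.divInt_eq_div, hqdef]; push_cast; ring
        rwa [heq] at h1
      exact Nat.le_of_dvd (by omega) (by exact_mod_cast hdvd)
  have hrt : r < (q : ℝ) := by
    rw [hqR, lt_div_iff₀ hmR]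
    have := Int.lt_floor_add_one (r * m)
    linarith
  have hst : s ≤ (q : ℝ) := h.2 ⟨htF, hrt⟩
  have : (q : ℝ) ≤ r + 1 / m := by
    rw [hqR, div_le_iff₀ hmR]
    have := Int.floor_le (r * m)
    rw [← hk] at this
    field_simp
    nlinarith
  linarith

/-- The infimum defining `dF` in the interior case is attained. -/
lemma exists_attained {α β : ℝ} (hα : α ∈ Set.Ioo (0 : ℝ) 1) (hβ : β ∈ Set.Ioo (0 : ℝ) 1)
    (hne : α ≠ β) :
    ∃ (m : ℕ) (r s : ℝ), 1 ≤ m ∧ r ∈ FareyRe m ∧ IsUpperNbr m r s ∧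
      α ∈ Set.Ioo r s ∧ β ∈ Set.Ioo r s ∧ dF α β = 1 / (m + 1) := by
  have hSne : (Sset α β).Nonempty := ⟨_, half_mem_Sset hα hβ⟩
  have habs : 0 < |α - β| := abs_pos.mpr (sub_ne_zero.mpr hne)
  have hfin : (Sset α β).Finite := by
    apply Set.Finite.subset ((Set.finite_Iic (⌈1 / |α - β|⌉₊)).image
      (fun n : ℕ => 1 / ((n : ℝ) + 1)))
    rintro d ⟨m, hm, rfl, r, s, hrF, hub, hαm, hβm⟩
    refine ⟨m, ?_, rfl⟩
    have hr0 : 0 ≤ r := mem_fareyRe_nonneg hrF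
    have hr1 : r < 1 := lt_trans hαm.1 hα.2
    have hgap : s - r ≤ 1 / m := by
      have := gap hm hr0 hr1 hub
      linarith
    have hlt : |α - β| < 1 / m := by
      rw [abs_sub_lt_iff]
      constructor <;> [skip; skip] <;>
        · have := hαm.1; have := hαm.2; have := hβm.1; have := hβm.2; linarith
    have hmR : (0 : ℝ) < (m : ℝ) := by exact_mod_cast hm
    have hmlt : (m : ℝ) < 1 / |α - β| := by
      rw [lt_div_iff₀ habs]
      rw [lt_div_iff₀ hmR] at hlt
      linarith
    have : (m : ℝ) ≤ (⌈1 / |α - β|⌉₊ : ℝ) := hmlt.le.trans (Nat.le_ceil _)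
    exact_mod_cast this
  have hmem := hSne.csInf_mem hfin
  obtain ⟨m, hm, hd, r, s, hrF, hub, hαm, hβm⟩ := hmem
  exact ⟨m, r, s, hm, hrF, hub, hαm, hβm, (dF_eq_sInf hα hβ hne).trans hd⟩

/-- Key nesting lemma: the interval at the finer level is contained in the coarser one. -/
lemma key {m₁ m₂ : ℕ} (h : m₁ ≤ m₂) {r₁ s₁ r₂ s₂ γ : ℝ}
    (hr₁ : r₁ ∈ FareyRe m₁) (hn₁ : IsUpperNbr m₁ r₁ s₁) (hn₂ : IsUpperNbr m₂ r₂ s₂)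
    (hγ₁ : γ ∈ Set.Ioo r₁ s₁) (hγ₂ : γ ∈ Set.Ioo r₂ s₂) :
    Set.Ioo r₂ s₂ ⊆ Set.Ioo r₁ s₁ := by
  have hs₁F : s₁ ∈ FareyRe m₂ := fareyRe_mono h hn₁.1.1
  have hr₁F : r₁ ∈ FareyRe m₂ := fareyRe_mono h hr₁
  have hle : r₁ ≤ r₂ := by
    by_contra hc
    push_neg at hc
    have := hn₂.2 ⟨hr₁F, hc⟩
    have := hγ₁.1; have := hγ₂.2
    linarith
  have hse : s₂ ≤ s₁ := hn₂.2 ⟨hs₁F, lt_trans hγ₂.1 hγ₁.2⟩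
  exact Set.Ioo_subset_Ioo hle hse

lemma dF_le_one {α β : ℝ} (hα : α ∈ Set.Icc (0 : ℝ) 1) (hβ : β ∈ Set.Icc (0 : ℝ) 1) :
    dF α β ≤ 1 := by
  unfold dF
  split_ifs with h1 h2
  · norm_num
  · exact le_rfl
  · push_neg at h2
    have hα' : α ∈ Set.Ioo (0 : ℝ) 1 :=
      ⟨lt_of_le_of_ne hα.1 (Ne.symm h2.1), lt_of_le_of_ne hα.2 h2.2.1⟩
    have hβ' : β ∈ Set.Ioo (0 : ℝ) 1 :=
      ⟨lt_of_le_of_ne hβ.1 (Ne.symm h2.2.2.1), lt_of_le_of_ne hβ.2 h2.2.2.2⟩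
    calc sInf _ ≤ 1 / 2 := csInf_le (bddBelow_Sset α β) (half_mem_Sset hα' hβ')
    _ ≤ 1 := by norm_num

end FareyAux

open FareyAux in
theorem stmt_6 (α β γ : ℝ) (hα : α ∈ Set.Icc (0 : ℝ) 1) (hβ : β ∈ Set.Icc (0 : ℝ) 1)
    (hγ : γ ∈ Set.Icc (0 : ℝ) 1) : dF α β ≤ max (dF α γ) (dF γ β) := by
  by_cases hab : α = β
  · subst hab
    have : dF α α = 0 := by unfold dF; rw [if_pos rfl]
    rw [this]
    exact le_max_of_le_left (dF_nonneg α γ)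
  by_cases hga : γ = α
  · subst hga
    exact le_max_of_le_right le_rfl
  by_cases hgb : γ = β
  · subst hgb
    exact le_max_of_le_left le_rfl
  by_cases hend : α = 0 ∨ α = 1 ∨ β = 0 ∨ β = 1
  · -- one of α, β is an endpoint; then some dF on the right equals 1
    have h1 : dF α β ≤ 1 := dF_le_one hα hβ
    rcases hend with h | h | h | h
    · have : dF α γ = 1 := by
        unfold dF; rw [if_neg (Ne.symm hga), if_pos (Or.inl h)]
      rw [this] at *; exact le_max_of_le_left h1
    · have : dF α γ = 1 := by
        unfold dF; rw [if_neg (Ne.symm hga), if_pos (Or.inr (Or.inl h))]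
      rw [this] at *; exact le_max_of_le_left h1
    · have : dF γ β = 1 := by
        unfold dF; rw [if_neg hgb, if_pos (Or.inr (Or.inr (Or.inl h)))]
      rw [this] at *; exact le_max_of_le_right h1
    · have : dF γ β = 1 := by
        unfold dF; rw [if_neg hgb, if_pos (Or.inr (Or.inr (Or.inr h)))]
      rw [this] at *; exact le_max_of_le_right h1
  push_neg at hend
  have hα' : α ∈ Set.Ioo (0 : ℝ) 1 :=
    ⟨lt_of_le_of_ne hα.1 (Ne.symm hend.1), lt_of_le_of_ne hα.2 hend.2.1⟩
  have hβ' : β ∈ Set.Ioo (0 : ℝ) 1 :=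
    ⟨lt_of_le_of_ne hβ.1 (Ne.symm hend.2.2.1), lt_of_le_of_ne hβ.2 hend.2.2.2⟩
  by_cases hgend : γ = 0 ∨ γ = 1
  · -- γ is an endpoint but differs from α : dF α γ = 1
    have : dF α γ = 1 := by
      unfold dF
      rw [if_neg (fun h => hga h.symm), if_pos]
      rcases hgend with h | h
      · exact Or.inr (Or.inr (Or.inl h))
      · exact Or.inr (Or.inr (Or.inr h))
    rw [this]
    exact le_max_of_le_left (dF_le_one hα hβ)
  push_neg at hgend
  have hγ' : γ ∈ Set.Ioo (0 : ℝ) 1 :=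
    ⟨lt_of_le_of_ne hγ.1 (Ne.symm hgend.1), lt_of_le_of_ne hγ.2 hgend.2⟩
  -- main case: attained infima
  obtain ⟨m₁, r₁, s₁, hm₁, hr₁F, hn₁, hα₁, hγ₁, hd₁⟩ :=
    exists_attained hα' hγ' (fun h => hga h.symm)
  obtain ⟨m₂, r₂, s₂, hm₂, hr₂F, hn₂, hγ₂, hβ₂, hd₂⟩ :=
    exists_attained hγ' hβ' hgb
  have hdab : dF α β = sInf (Sset α β) := dF_eq_sInf hα' hβ' hab
  rcases le_total m₁ m₂ with hmm | hmm
  · have hsub := key hmm hr₁F hn₁ hn₂ hγ₁ hγ₂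
    have hmem : (1 : ℝ) / (m₁ + 1) ∈ Sset α β :=
      ⟨m₁, hm₁, rfl, r₁, s₁, hr₁F, hn₁, hα₁, hsub hβ₂⟩
    have : dF α β ≤ 1 / (m₁ + 1) := hdab ▸ csInf_le (bddBelow_Sset α β) hmem
    rw [hd₁]
    exact le_max_of_le_left this
  · have hsub := key hmm hr₂F hn₂ hn₁ hγ₂ hγ₁
    have hmem : (1 : ℝ) / (m₂ + 1) ∈ Sset α β :=
      ⟨m₂, hm₂, rfl, r₂, s₂, hr₂F, hn₂, hsub hα₁, hβ₂⟩
    have : dF α β ≤ 1 / (m₂ + 1) := hdab ▸ csInf_le (bddBelow_Sset α β) hmem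
    rw [hd₂]
    exact le_max_of_le_right this
end

section
/- If α ≠ β in [0,1] and there exists r ∈ F_m with α ≤ r ≤ β, then d_F(α,β) > 1/(m+1). -/
lemma farey_one {x : ℝ} (hx : x ∈ FareyRe 1) : x = 0 ∨ x = 1 := by
  obtain ⟨q, hq, h0, h1, hd⟩ := hx
  have hden : q.den = 1 := Nat.le_antisymm hd q.pos
  have hnum : (q.num : ℚ) = q := Rat.den_eq_one_iff q |>.mp hden
  have h0' : (0 : ℤ) ≤ q.num := by exact_mod_cast hnum ▸ h0
  have h1' : q.num ≤ 1 := by exact_mod_cast hnum ▸ h1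
  interval_cases h : q.num
  · left; rw [← hq, ← hnum]; norm_num
  · right; rw [← hq, ← hnum]; norm_num

lemma farey_mono {m m' : ℕ} (h : m ≤ m') : FareyRe m ⊆ FareyRe m' := by
  rintro x ⟨q, hq, h0, h1, hd⟩
  exact ⟨q, hq, h0, h1, hd.trans h⟩

theorem stmt_7 (m : ℕ) (hm : 1 ≤ m) (α β r : ℝ) (hα : α ∈ Set.Icc (0 : ℝ) 1)
    (hβ : β ∈ Set.Icc (0 : ℝ) 1) (hne : α ≠ β) (hr : r ∈ FareyRe m)
    (h1 : α ≤ r) (h2 : r ≤ β) : 1 / ((m : ℝ) + 1) < dF α β := by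
  have hm1 : (0 : ℝ) < (m : ℝ) + 1 := by positivity
  unfold dF
  rw [if_neg hne]
  by_cases hb : α = 0 ∨ α = 1 ∨ β = 0 ∨ β = 1
  · rw [if_pos hb]
    rw [div_lt_one hm1]
    have : (1 : ℝ) ≤ (m : ℝ) := by exact_mod_cast hm
    linarith
  · rw [if_neg hb]
    push_neg at hb
    obtain ⟨hb0, hb1, hb2, hb3⟩ := hb
    have hα0 : 0 < α := lt_of_le_of_ne hα.1 (Ne.symm hb0)
    have hα1 : α < 1 := lt_of_le_of_ne hα.2 hb1
    have hβ0 : 0 < β := lt_of_le_of_ne hβ.1 (Ne.symm hb2)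
    have hβ1 : β < 1 := lt_of_le_of_ne hβ.2 hb3
    -- m = 1 is impossible: r would be 0 or 1
    rcases Nat.lt_or_ge m 2 with hm2 | hm2
    · have : m = 1 := by omega
      subst this
      rcases farey_one hr with h | h
      · exfalso; rw [h] at h1; linarith
      · exfalso; rw [h] at h2; linarith
    -- nonempty: witness m' = 1, interval (0,1)
    have hne' : ((1:ℝ)/2) ∈ {d : ℝ | ∃ m : ℕ, 1 ≤ m ∧ d = 1 / (m + 1) ∧
        ∃ r s : ℝ, r ∈ FareyRe m ∧ IsUpperNbr m r s ∧
          α ∈ Set.Ioo r s ∧ β ∈ Set.Ioo r s} := by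
      refine ⟨1, le_refl 1, by norm_num, 0, 1, ⟨0, by norm_num⟩, ⟨⟨⟨1, by norm_num⟩, one_pos⟩, ?_⟩,
        ⟨hα0, hα1⟩, ⟨hβ0, hβ1⟩⟩
      rintro t ⟨ht, ht0⟩
      rcases farey_one ht with h | h
      · exfalso; rw [h] at ht0; exact lt_irrefl 0 ht0
      · rw [h]
    -- lower bound: every element is ≥ 1/m
    have hbd : ∀ d ∈ {d : ℝ | ∃ m : ℕ, 1 ≤ m ∧ d = 1 / (m + 1) ∧
        ∃ r s : ℝ, r ∈ FareyRe m ∧ IsUpperNbr m r s ∧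
          α ∈ Set.Ioo r s ∧ β ∈ Set.Ioo r s}, 1 / (m : ℝ) ≤ d := by
      rintro d ⟨m', hm', rfl, r', s', hr', hub, ⟨hαl, hαu⟩, ⟨hβl, hβu⟩⟩
      have hrs : r' < r ∧ r < s' := ⟨lt_of_lt_of_le hαl h1, lt_of_le_of_lt h2 hβu⟩
      have hm'm : m' < m := by
        by_contra hcon
        push_neg at hcon
        have : r ∈ FareyRe m' := farey_mono hcon hr
        exact absurd (hub.2 ⟨this, hrs.1⟩) (not_le.mpr hrs.2)
      have h1 : (m' : ℝ) + 1 ≤ (m : ℝ) := by exact_mod_cast hm'm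
      apply one_div_le_one_div_of_le
      · positivity
      · exact h1
    have hmR : (0 : ℝ) < (m : ℝ) := by exact_mod_cast Nat.lt_of_lt_of_le Nat.zero_lt_one hm
    have : 1 / (m : ℝ) ≤ sInf _ := le_csInf ⟨_, hne'⟩ hbd
    refine lt_of_lt_of_le ?_ this
    apply one_div_lt_one_div_of_lt hmR
    linarith
end

section
/- For all α, β ∈ [0,1], the Euclidean distance is bounded by twice the Farey distance: |α - β| ≤ 2·d_F(α,β). -/
lemma gap_le (m : ℕ) (hm : 1 ≤ m) (r s : ℝ) (hr : r ∈ FareyRe m) (hs : IsUpperNbr m r s) :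
    s - r ≤ 1 / m := by
  by_contra h
  push_neg at h
  obtain ⟨qr, hqr, hqr0, hqr1, _⟩ := hr
  obtain ⟨⟨hsF, hrs⟩, hlb⟩ := hs
  obtain ⟨qs, hqs, hqs0, hqs1, _⟩ := hsF
  have hmpos : (0:ℝ) < m := by exact_mod_cast Nat.lt_of_lt_of_le Nat.zero_lt_one hm
  have hr0 : (0:ℝ) ≤ r := by rw [← hqr]; exact_mod_cast hqr0
  have hs1 : s ≤ 1 := by rw [← hqs]; exact_mod_cast hqs1
  set k : ℤ := ⌊r * m⌋ + 1 with hk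
  have hkr : r < (k:ℝ)/m := by
    rw [lt_div_iff₀ hmpos, hk]
    push_cast
    have := Int.lt_floor_add_one (r * m)
    linarith
  have hks : (k:ℝ)/m < s := by
    rw [div_lt_iff₀ hmpos]
    have h2 : (1:ℝ)/m < s - r := h
    rw [div_lt_iff₀ hmpos] at h2
    have := Int.floor_le (r * m)
    rw [hk]
    push_cast
    nlinarith
  have hk0 : 0 < (k:ℝ)/m := lt_of_le_of_lt hr0 hkr
  have hmem : ((k:ℝ)/m) ∈ FareyRe m := by
    refine ⟨(k:ℚ)/m, by push_cast; ring, ?_, ?_, ?_⟩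
    · have : (0:ℝ) ≤ ((((k:ℚ)/m) : ℚ) : ℝ) := by push_cast; linarith
      exact_mod_cast this
    · have : ((((k:ℚ)/m) : ℚ) : ℝ) ≤ 1 := by push_cast; linarith
      exact_mod_cast this
    · have hd := Rat.den_dvd k m
      rw [Rat.divInt_eq_div] at hd
      have hd' : ((k:ℚ)/(m:ℚ)).den ∣ m := by exact_mod_cast hd
      exact Nat.le_of_dvd (by exact_mod_cast hmpos) hd'
  exact absurd (hlb ⟨hmem, hkr⟩) (not_le.mpr hks)

theorem stmt_10 (α β : ℝ) (hα : α ∈ Set.Icc (0 : ℝ) 1) (hβ : β ∈ Set.Icc (0 : ℝ) 1) :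
    |α - β| ≤ 2 * dF α β := by
  rcases eq_or_ne α β with h | h
  · simp [dF, h]
  unfold dF
  rw [if_neg h]
  by_cases hb : α = 0 ∨ α = 1 ∨ β = 0 ∨ β = 1
  · rw [if_pos hb]
    rw [abs_sub_le_iff]
    constructor <;> linarith [hα.1, hα.2, hβ.1, hβ.2]
  rw [if_neg hb]
  push_neg at hb
  obtain ⟨ha0, ha1, hb0, hb1⟩ := hb
  have hαo : α ∈ Set.Ioo (0:ℝ) 1 := ⟨hα.1.lt_of_ne (Ne.symm ha0), hα.2.lt_of_ne ha1⟩
  have hβo : β ∈ Set.Ioo (0:ℝ) 1 := ⟨hβ.1.lt_of_ne (Ne.symm hb0), hβ.2.lt_of_ne hb1⟩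
  have mem0 : (0:ℝ) ∈ FareyRe 1 := ⟨0, by norm_num⟩
  have mem1 : (1:ℝ) ∈ FareyRe 1 := ⟨1, by norm_num⟩
  have upper01 : IsUpperNbr 1 (0:ℝ) 1 := by
    refine ⟨⟨mem1, by norm_num⟩, ?_⟩
    rintro t ⟨⟨q, hq, hq0, hq1, hqd⟩, ht⟩
    have hd1 : q.den = 1 := Nat.le_antisymm hqd q.pos
    have hqz : (q.num : ℚ) = q := Rat.coe_int_num_of_den_eq_one hd1
    have hqpos : 0 < q := by
      have : (0:ℝ) < (q:ℝ) := by rw [hq]; exact ht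
      exact_mod_cast this
    have hnum : 1 ≤ q.num := by
      have := Rat.num_pos.mpr hqpos
      omega
    have : (1:ℚ) ≤ q := by rw [← hqz]; exact_mod_cast hnum
    rw [← hq]; exact_mod_cast this
  have hne : Set.Nonempty {d : ℝ | ∃ m : ℕ, 1 ≤ m ∧ d = 1 / (m + 1) ∧
      ∃ r s : ℝ, r ∈ FareyRe m ∧ IsUpperNbr m r s ∧
        α ∈ Set.Ioo r s ∧ β ∈ Set.Ioo r s} := by
    exact ⟨1/2, 1, le_refl 1, by norm_num, 0, 1, mem0, upper01, hαo, hβo⟩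
  have hlow : ∀ d ∈ {d : ℝ | ∃ m : ℕ, 1 ≤ m ∧ d = 1 / (m + 1) ∧
      ∃ r s : ℝ, r ∈ FareyRe m ∧ IsUpperNbr m r s ∧
        α ∈ Set.Ioo r s ∧ β ∈ Set.Ioo r s}, |α - β|/2 ≤ d := by
    rintro d ⟨m, hm, rfl, r, s, hr, hs, hαI, hβI⟩
    have hgap := gap_le m hm r s hr hs
    have hab : |α - β| ≤ s - r := by
      rw [abs_sub_le_iff]
      constructor <;> [linarith [hαI.2, hβI.1]; linarith [hβI.2, hαI.1]]
    have hm1 : (1:ℝ) ≤ m := by exact_mod_cast hm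
    have h12 : (1:ℝ)/m ≤ 2/(m+1) := by
      rw [div_le_div_iff₀ (by linarith) (by linarith)]
      linarith
    have h2 : (2:ℝ)/(m+1) = 2 * (1/(m+1)) := by ring
    linarith
  have := le_csInf hne hlow
  linarith
end

section
/- Let (α_n) be a Cauchy sequence in [0,1] with respect to the Farey metric d_F whose Euclidean limit α is rational. Then exactly one of the following holds eventually: α_n = α for all large n, or α_n > α for all large n, or α_n < α for all large n. -/
lemma zero_mem_fareyRe {m : ℕ} (hm : 1 ≤ m) : (0:ℝ) ∈ FareyRe m :=
  ⟨0, by norm_num, le_refl _, by norm_num, by simpa using hm⟩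

lemma one_mem_fareyRe {m : ℕ} (hm : 1 ≤ m) : (1:ℝ) ∈ FareyRe m :=
  ⟨1, by norm_num, by norm_num, le_refl _, by simpa using hm⟩

lemma isUpperNbr_zero_one : IsUpperNbr 1 0 1 := by
  constructor
  · exact ⟨one_mem_fareyRe le_rfl, by norm_num⟩
  · rintro t ⟨⟨p, rfl, hp0, hp1, hden⟩, ht⟩
    have hp : (0:ℚ) < p := by exact_mod_cast ht
    have hd : p.den = 1 := le_antisymm hden p.den_pos
    have h3 := (Rat.den_eq_one_iff p).mp hd
    have h4 : (1:ℤ) ≤ p.num := Rat.num_pos.mpr hp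
    have : (1:ℚ) ≤ p := by
      calc (1:ℚ) ≤ (p.num:ℚ) := by exact_mod_cast h4
        _ = p := h3
    exact_mod_cast this

lemma notMem_Ioo_farey {m : ℕ} {r s x : ℝ} (hs : IsUpperNbr m r s)
    (hx : x ∈ FareyRe m) : x ∉ Set.Ioo r s := by
  rintro ⟨h1, h2⟩
  exact absurd (hs.2 ⟨hx, h1⟩) (not_le.mpr h2)

lemma dF_extract {x y : ℝ} (hx : x ∈ Set.Ioo (0:ℝ) 1) (hy : y ∈ Set.Ioo (0:ℝ) 1)
    (hne : x ≠ y) {ε : ℝ} (h : dF x y < ε) :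
    ∃ m : ℕ, 1 ≤ m ∧ 1/((m:ℝ)+1) < ε ∧ ∃ r s : ℝ, r ∈ FareyRe m ∧ IsUpperNbr m r s ∧
      x ∈ Set.Ioo r s ∧ y ∈ Set.Ioo r s := by
  rw [dF, if_neg hne, if_neg (by push_neg; exact ⟨ne_of_gt hx.1, ne_of_lt hx.2,
    ne_of_gt hy.1, ne_of_lt hy.2⟩)] at h
  have hne' : Set.Nonempty {d : ℝ | ∃ m : ℕ, 1 ≤ m ∧ d = 1 / (m + 1) ∧
      ∃ r s : ℝ, r ∈ FareyRe m ∧ IsUpperNbr m r s ∧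
      x ∈ Set.Ioo r s ∧ y ∈ Set.Ioo r s} :=
    ⟨1/2, 1, le_rfl, by norm_num, 0, 1, zero_mem_fareyRe le_rfl, isUpperNbr_zero_one,
      ⟨hx.1, hx.2⟩, ⟨hy.1, hy.2⟩⟩
  obtain ⟨d, ⟨m, hm1, rfl, r, s, hr, hs, hxr, hyr⟩, hd⟩ := exists_lt_of_csInf_lt hne' h
  exact ⟨m, hm1, by exact_mod_cast hd, r, s, hr, hs, hxr, hyr⟩

lemma dF_eq_one {x y : ℝ} (hne : x ≠ y) (hb : x = 0 ∨ x = 1 ∨ y = 0 ∨ y = 1) :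
    dF x y = 1 := by rw [dF, if_neg hne, if_pos hb]

theorem stmt_12 (a : ℕ → ℝ) (ha : ∀ n, a n ∈ Set.Icc (0 : ℝ) 1)
    (hcauchy : ∀ ε > (0 : ℝ), ∃ N : ℕ, ∀ j ≥ N, ∀ k ≥ N, dF (a j) (a k) < ε)
    (α : ℝ) (hlim : Filter.Tendsto a Filter.atTop (nhds α))
    (hrat : ∃ q : ℚ, (q : ℝ) = α) :
    ((∃ N : ℕ, ∀ n ≥ N, a n = α) ∧ ¬ (∃ N : ℕ, ∀ n ≥ N, a n > α) ∧
        ¬ (∃ N : ℕ, ∀ n ≥ N, a n < α)) ∨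
    (¬ (∃ N : ℕ, ∀ n ≥ N, a n = α) ∧ (∃ N : ℕ, ∀ n ≥ N, a n > α) ∧
        ¬ (∃ N : ℕ, ∀ n ≥ N, a n < α)) ∨
    (¬ (∃ N : ℕ, ∀ n ≥ N, a n = α) ∧ ¬ (∃ N : ℕ, ∀ n ≥ N, a n > α) ∧
        (∃ N : ℕ, ∀ n ≥ N, a n < α)) := by
  obtain ⟨q, hq⟩ := hrat
  have excl : ∀ (b c : ℝ → Prop), (∀ x, b x → c x → False) →
      (∃ N, ∀ n ≥ N, b (a n)) → ¬ ∃ N, ∀ n ≥ N, c (a n) := by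
    rintro b c hbc ⟨N1, h1⟩ ⟨N2, h2⟩
    exact hbc _ (h1 _ (le_max_left N1 N2)) (h2 _ (le_max_right N1 N2))
  by_cases heq : ∃ N, ∀ n ≥ N, a n = α
  · exact Or.inl ⟨heq,
      excl (· = α) (· > α) (fun x h1 h2 => absurd h1 (ne_of_gt h2)) heq,
      excl (· = α) (· < α) (fun x h1 h2 => absurd h1 (ne_of_lt h2)) heq⟩
  · -- α ∈ [0,1]
    have hα0 : 0 ≤ α := ge_of_tendsto hlim (Filter.Eventually.of_forall fun n => (ha n).1)
    have hα1 : α ≤ 1 := le_of_tendsto hlim (Filter.Eventually.of_forall fun n => (ha n).2)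
    have hq0 : 0 ≤ q := by rw [← hq] at hα0; exact_mod_cast hα0
    have hq1 : q ≤ 1 := by rw [← hq] at hα1; exact_mod_cast hα1
    set m : ℕ := max 1 q.den with hm
    have hm1 : 1 ≤ m := le_max_left _ _
    have hε : (0:ℝ) < 1/((m:ℝ)+1) := by positivity
    have hεhalf : 1/((m:ℝ)+1) ≤ 1/2 := by
      apply one_div_le_one_div_of_le <;> [norm_num; skip]
      have : (1:ℝ) ≤ (m:ℝ) := by exact_mod_cast hm1
      linarith
    obtain ⟨N, hN⟩ := hcauchy _ hε
    push_neg at heq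
    obtain ⟨j, hjN, hja⟩ := heq N
    -- interiority of a n for n ≥ N whenever needed via dF
    have hint : ∀ k ≥ N, ∀ l ≥ N, a k ≠ a l →
        a k ∈ Set.Ioo (0:ℝ) 1 ∧ a l ∈ Set.Ioo (0:ℝ) 1 := by
      intro k hk l hl hkl
      have hd := hN k hk l hl
      by_contra hcon
      have hb : a k = 0 ∨ a k = 1 ∨ a l = 0 ∨ a l = 1 := by
        rcases (ha k) with ⟨h1, h2⟩; rcases (ha l) with ⟨h3, h4⟩
        by_contra hb; push_neg at hb
        exact hcon ⟨⟨lt_of_le_of_ne h1 (Ne.symm hb.1), lt_of_le_of_ne h2 hb.2.1⟩,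
          ⟨lt_of_le_of_ne h3 (Ne.symm hb.2.2.1), lt_of_le_of_ne h4 hb.2.2.2⟩⟩
      rw [dF_eq_one hkl hb] at hd
      linarith
    -- key claim
    have key : ∀ k ≥ N, (α < a k ↔ α < a j) ∧ (a k < α ↔ a j < α) := by
      intro k hk
      by_cases hkj : a k = a j
      · rw [hkj]; exact ⟨Iff.rfl, Iff.rfl⟩
      · obtain ⟨hik, hij⟩ := hint k hk j hjN hkj
        have hd := hN k hk j hjN
        obtain ⟨m', hm'1, hm'lt, r, s, hr, hs, hkr, hjr⟩ := dF_extract hik hij hkj hd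
        have hmm' : m < m' := by
          by_contra hcon
          push_neg at hcon
          have : (1:ℝ)/((m:ℝ)+1) ≤ 1/((m':ℝ)+1) := by
            apply one_div_le_one_div_of_le (by positivity)
            have : (m':ℝ) ≤ (m:ℝ) := by exact_mod_cast hcon
            linarith
          linarith
        have hαmem : α ∈ FareyRe m' :=
          ⟨q, hq, hq0, hq1, le_trans (le_max_right 1 q.den) hmm'.le⟩
        have hnotin := notMem_Ioo_farey hs hαmem
        rw [Set.mem_Ioo] at hnotin
        push_neg at hnotin
        rcases le_or_gt α r with hcase | hcase
        · constructor
          · constructor <;> intro _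
            · exact lt_of_le_of_lt hcase hjr.1
            · exact lt_of_le_of_lt hcase hkr.1
          · constructor <;> intro h
            · exact absurd (lt_of_le_of_lt hcase hkr.1) (asymm h)
            · exact absurd (lt_of_le_of_lt hcase hjr.1) (asymm h)
        · have hsα : s ≤ α := hnotin hcase
          constructor
          · constructor <;> intro h
            · exact absurd (lt_of_lt_of_le hkr.2 hsα) (asymm h)
            · exact absurd (lt_of_lt_of_le hjr.2 hsα) (asymm h)
          · constructor <;> intro _
            · exact lt_of_lt_of_le hjr.2 hsα
            · exact lt_of_lt_of_le hkr.2 hsα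
    rcases hja.lt_or_gt with hlt | hgt
    · refine Or.inr (Or.inr ⟨?_, ?_, ⟨N, fun k hk => (key k hk).2.mpr hlt⟩⟩)
      · exact fun h => excl (· = α) (· < α) (fun x h1 h2 => absurd h1 (ne_of_lt h2)) h
          ⟨N, fun k hk => (key k hk).2.mpr hlt⟩
      · intro h
        exact excl (· < α) (· > α) (fun x h1 h2 => absurd h1 (asymm h2))
          ⟨N, fun k hk => (key k hk).2.mpr hlt⟩ h
    · refine Or.inr (Or.inl ⟨?_, ⟨N, fun k hk => (key k hk).1.mpr hgt⟩, ?_⟩)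
      · exact fun h => excl (· = α) (· > α) (fun x h1 h2 => absurd h1 (ne_of_gt h2)) h
          ⟨N, fun k hk => (key k hk).1.mpr hgt⟩
      · intro h
        exact excl (· > α) (· < α) (fun x h1 h2 => absurd h2 (asymm h1))
          ⟨N, fun k hk => (key k hk).1.mpr hgt⟩ h
end

section
/- For irrational α ∈ [0,1], the complexity function of the mechanical (Sturmian) word ω_α satisfies p(m, ω_α) = m + 1 for all m ≥ 1. -/
/-- The mechanical word of rotation number `α`: `ω_α(n) = χ_{[1-α,1)}(nα mod 1)`. -/
noncomputable def mech (α : ℝ) (n : ℤ) : ℕ :=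
  if Int.fract ((n : ℝ) * α) ∈ Set.Ico (1 - α) 1 then 1 else 0

/-- The set of factors (subwords) of length `n` of a two-sided sequence `ω`. -/
def factorsOf (ω : ℤ → ℕ) (n : ℕ) : Set (Fin n → ℕ) :=
  {w | ∃ m : ℤ, ∀ i : Fin n, w i = ω (m + (i.val : ℤ))}

/-- The complexity function: the number of distinct factors of length `n`. -/
noncomputable def complexity (ω : ℤ → ℕ) (n : ℕ) : ℕ :=
  Nat.card (factorsOf ω n)

/-! ### Auxiliary definitions -/

noncomputable def stG (α : ℝ) (m : ℕ) (x : ℝ) : ℤ :=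
  ∑ j ∈ Finset.range m, ⌊x + ((j : ℝ) + 1) * α⌋

noncomputable def stC (α : ℝ) (m : ℕ) : ℤ := ∑ j ∈ Finset.range m, ⌊((j : ℝ) + 1) * α⌋

def fsum (m : ℕ) (w : Fin m → ℕ) : ℕ :=
  ∑ j ∈ Finset.range m, ∑ i ∈ Finset.range (j + 1), (if h : i < m then w ⟨i, h⟩ else 0)

section
variable {α : ℝ}

lemma st_mech (h0 : 0 < α) (h1 : α < 1) (n : ℤ) :
    (mech α n : ℤ) = ⌊(n : ℝ) * α + α⌋ - ⌊(n : ℝ) * α⌋ := by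
  set t : ℝ := (n : ℝ) * α with ht
  have hfr : t - ⌊t⌋ = Int.fract t := Int.self_sub_floor t
  by_cases h : Int.fract t ∈ Set.Ico (1 - α) 1
  · have h2 : ((⌊t⌋ + 1 : ℤ) : ℝ) ≤ t + α := by push_cast; nlinarith [h.1]
    have h3 : ⌊t⌋ + 1 ≤ ⌊t + α⌋ := Int.le_floor.2 h2
    have h4 : ⌊t + α⌋ ≤ ⌊t⌋ + 1 := by
      apply Int.lt_add_one_iff.1
      apply Int.floor_lt.2
      push_cast
      nlinarith [Int.fract_lt_one t]
    simp only [mech, ← ht, if_pos h]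
    omega
  · have h5 : Int.fract t < 1 - α := by
      rcases lt_or_ge (Int.fract t) (1 - α) with h' | h'
      · exact h'
      · exact absurd ⟨h', Int.fract_lt_one t⟩ h
    have h6 : ⌊t + α⌋ ≤ ⌊t⌋ := by
      apply Int.lt_add_one_iff.1
      apply Int.floor_lt.2
      push_cast
      nlinarith [Int.fract_nonneg t]
    have h7 : ⌊t⌋ ≤ ⌊t + α⌋ := by
      apply Int.floor_mono; nlinarith
    simp only [mech, ← ht, if_neg h]
    omega

lemma st_prefix (h0 : 0 < α) (h1 : α < 1) (k : ℤ) (j : ℕ) :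
    (∑ i ∈ Finset.range j, (mech α (k + i) : ℤ)) = ⌊Int.fract ((k : ℝ) * α) + (j : ℝ) * α⌋ := by
  induction j with
  | zero =>
    simp [Int.floor_eq_zero_iff, Int.fract_nonneg, Int.fract_lt_one, Set.mem_Ico]
  | succ j ih =>
    rw [Finset.sum_range_succ, ih, st_mech h0 h1]
    have key : ∀ c : ℝ, ⌊Int.fract ((k : ℝ) * α) + c⌋ = ⌊(k : ℝ) * α + c⌋ - ⌊(k : ℝ) * α⌋ := by
      intro c
      rw [Int.fract, show (k : ℝ) * α - ⌊(k : ℝ) * α⌋ + c = ((k : ℝ) * α + c) - ⌊(k : ℝ) * α⌋ by ring,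
        Int.floor_sub_intCast]
    rw [key ((j : ℝ) * α), key (((j + 1 : ℕ) : ℝ) * α)]
    have e1 : ((k + (j : ℤ) : ℤ) : ℝ) * α = (k : ℝ) * α + (j : ℝ) * α := by push_cast; ring
    have e2 : (k : ℝ) * α + ((j + 1 : ℕ) : ℝ) * α = ((k : ℝ) * α + (j : ℝ) * α) + α := by
      push_cast; ring
    rw [e1, e2]
    ring

lemma st_count (T : Finset ℝ) (hT : ∀ t ∈ T, t ∈ Set.Ioo (0:ℝ) 1) :
    ∀ c : ℕ, c ≤ T.card → ∃ a b : ℝ, 0 ≤ a ∧ a < b ∧ b ≤ 1 ∧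
      ∀ x ∈ Set.Ioo a b, (T.filter (· ≤ x)).card = c := by
  intro c
  induction c with
  | zero =>
    intro _
    by_cases hne : T.Nonempty
    · refine ⟨0, T.min' hne, le_refl _, (hT _ (T.min'_mem hne)).1,
        le_of_lt (hT _ (T.min'_mem hne)).2, ?_⟩
      intro x hx
      rw [Finset.card_eq_zero, Finset.filter_eq_empty_iff]
      intro t htT
      have := T.min'_le t htT
      simp only [not_le]
      exact lt_of_lt_of_le hx.2 this
    · rw [Finset.not_nonempty_iff_eq_empty] at hne
      exact ⟨0, 1, le_refl _, zero_lt_one, le_refl _, fun x _ => by simp [hne]⟩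
  | succ c ih =>
    intro hc
    obtain ⟨a, b, ha, hab, hb1, hcount⟩ := ih (Nat.le_of_succ_le hc)
    set x0 : ℝ := (a + b) / 2 with hx0def
    have hx0 : x0 ∈ Set.Ioo a b := ⟨by simp only [hx0def]; linarith, by simp only [hx0def]; linarith⟩
    have hc0 : (T.filter (· ≤ x0)).card = c := hcount x0 hx0
    have hT' : (T.filter (fun t => ¬ t ≤ x0)).Nonempty := by
      rw [← Finset.card_pos]
      have := Finset.card_filter_add_card_filter_not (s := T) (p := (· ≤ x0))
      omega
    set t : ℝ := (T.filter (fun t => ¬ t ≤ x0)).min' hT' with htdef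
    have htmem := Finset.min'_mem _ hT'
    rw [Finset.mem_filter] at htmem
    have htT : t ∈ T := htmem.1
    have hx0t : x0 < t := not_le.1 htmem.2
    set T'' := T.filter (fun s => t < s) with hT''def
    set b' : ℝ := if h : T''.Nonempty then T''.min' h else 1 with hb'def
    have htb' : t < b' := by
      rw [hb'def]
      split
      · rename_i h
        exact (Finset.mem_filter.1 (Finset.min'_mem T'' h)).2
      · exact (hT t htT).2
    have hb'1 : b' ≤ 1 := by
      rw [hb'def]
      split
      · rename_i h
        exact le_of_lt (hT _ (Finset.mem_filter.1 (Finset.min'_mem T'' h)).1).2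
      · exact le_refl _
    refine ⟨t, b', le_of_lt (hT t htT).1, htb', hb'1, ?_⟩
    intro x hx
    have hfe : T.filter (· ≤ x) = insert t (T.filter (· ≤ x0)) := by
      ext s
      simp only [Finset.mem_filter, Finset.mem_insert]
      constructor
      · rintro ⟨hsT, hsx⟩
        by_cases hs0 : s ≤ x0
        · exact Or.inr ⟨hsT, hs0⟩
        · have hts : t ≤ s := Finset.min'_le _ s (Finset.mem_filter.2 ⟨hsT, hs0⟩)
          rcases eq_or_lt_of_le hts with h | h
          · exact Or.inl h.symm
          · exfalso
            have hsT'' : s ∈ T'' := Finset.mem_filter.2 ⟨hsT, h⟩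
            have hb'le : b' ≤ s := by
              rw [hb'def]
              rw [dif_pos ⟨s, hsT''⟩]
              exact Finset.min'_le _ s hsT''
            linarith [hx.2]
      · rintro (rfl | ⟨hsT, hsx0⟩)
        · exact ⟨htT, le_of_lt hx.1⟩
        · exact ⟨hsT, by linarith [hx.1]⟩
    rw [hfe, Finset.card_insert_of_notMem, hc0]
    rw [Finset.mem_filter]
    rintro ⟨-, h⟩
    exact absurd h (not_le.2 hx0t)

lemma st_dense (hirr : Irrational α) (a b : ℝ) (ha : 0 ≤ a) (hb : b ≤ 1)
    (hab : a < b) : ∃ k : ℤ, Int.fract ((k : ℝ) * α) ∈ Set.Ioo a b := by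
  set S : AddSubgroup ℝ :=
    { carrier := {x | ∃ mk : ℤ × ℤ, x = mk.1 + mk.2 * α}
      zero_mem' := ⟨(0, 0), by simp⟩
      add_mem' := by
        rintro x y ⟨⟨m1, k1⟩, rfl⟩ ⟨⟨m2, k2⟩, rfl⟩
        exact ⟨(m1 + m2, k1 + k2), by push_cast; ring⟩
      neg_mem' := by
        rintro x ⟨⟨m1, k1⟩, rfl⟩
        exact ⟨(-m1, -k1), by push_cast; ring⟩ } with hSdef
  have hdense : Dense (S : Set ℝ) := by
    rcases S.dense_or_cyclic with h | ⟨a0, ha0⟩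
    · exact h
    · exfalso
      have h1S : (1 : ℝ) ∈ S := ⟨(1, 0), by push_cast; ring⟩
      have hαS : α ∈ S := ⟨(0, 1), by push_cast; ring⟩
      rw [ha0, AddSubgroup.mem_closure_singleton] at h1S hαS
      obtain ⟨n, hn⟩ := h1S
      obtain ⟨p, hp⟩ := hαS
      have hn0 : n ≠ 0 := by rintro rfl; simp at hn
      apply hirr
      refine ⟨(p : ℚ) / (n : ℚ), ?_⟩
      have hnr : (n : ℝ) ≠ 0 := Int.cast_ne_zero.2 hn0
      push_cast
      rw [div_eq_iff hnr]
      rw [zsmul_eq_mul] at hn hp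
      linear_combination (n : ℝ) * hp - (p : ℝ) * hn
  obtain ⟨x, hxS, hx⟩ : ∃ x ∈ (S : Set ℝ), x ∈ Set.Ioo a b :=
    hdense.exists_mem_open isOpen_Ioo (Set.nonempty_Ioo.2 hab)
  obtain ⟨⟨mm, k⟩, rfl⟩ := hxS
  refine ⟨k, ?_⟩
  have h01 : ((mm : ℝ) + k * α) ∈ Set.Ico (0:ℝ) 1 :=
    ⟨le_trans ha (le_of_lt hx.1), lt_of_lt_of_le hx.2 hb⟩
  have : Int.fract ((k : ℝ) * α) = (mm : ℝ) + k * α := by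
    rw [← Int.fract_intCast_add mm ((k : ℝ) * α), Int.fract_eq_self.2 ⟨h01.1, h01.2⟩]
  rw [this]
  exact hx

lemma st_int_mul (hirr : Irrational α) {d z : ℤ} (hd : d ≠ 0) (h : (d : ℝ) * α = z) :
    False := by
  apply hirr
  refine ⟨(z : ℚ) / (d : ℚ), ?_⟩
  have hdr : (d : ℝ) ≠ 0 := Int.cast_ne_zero.2 hd
  push_cast
  rw [div_eq_iff hdr]
  linarith [h]

lemma st_indicator (x : ℝ) (hx0 : 0 ≤ x) (hx1 : x < 1) (c : ℝ) :
    ⌊x + c⌋ = ⌊c⌋ + (if 1 - Int.fract c ≤ x then 1 else 0) := by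
  have hdec : x + c = (x + Int.fract c) + (⌊c⌋ : ℤ) := by rw [Int.fract]; ring
  rw [hdec, Int.floor_add_intCast]
  by_cases h : 1 - Int.fract c ≤ x
  · rw [if_pos h]
    have h1 : ⌊x + Int.fract c⌋ = 1 := by
      rw [Int.floor_eq_iff]
      constructor
      · push_cast; linarith
      · push_cast; nlinarith [Int.fract_lt_one c]
    omega
  · rw [if_neg h]
    push_neg at h
    have h1 : ⌊x + Int.fract c⌋ = 0 := by
      rw [Int.floor_eq_zero_iff]
      exact ⟨by nlinarith [Int.fract_nonneg c], by nlinarith⟩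
    omega

lemma st_fract_ne (hirr : Irrational α) (j : ℕ) : Int.fract (((j : ℝ) + 1) * α) ≠ 0 := by
  intro h
  have : ((j : ℝ) + 1) * α = (⌊((j : ℝ) + 1) * α⌋ : ℝ) := by
    have := Int.self_sub_floor (((j : ℝ) + 1) * α)
    rw [h] at this
    linarith
  apply st_int_mul hirr (d := (j : ℤ) + 1) (z := ⌊((j : ℝ) + 1) * α⌋)
  · omega
  · push_cast
    exact this

lemma st_fract_inj (hirr : Irrational α) {i j : ℕ}
    (h : Int.fract (((i : ℝ) + 1) * α) = Int.fract (((j : ℝ) + 1) * α)) : i = j := by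
  by_contra hne
  obtain ⟨z, hz⟩ := Int.fract_eq_fract.1 h
  apply st_int_mul hirr (d := (i : ℤ) - j) (z := z)
  · omega
  · push_cast
    linarith [hz]

lemma st_onto (hirr : Irrational α) (m c : ℕ) (hc : c ≤ m) :
    ∃ k : ℤ, stG α m (Int.fract ((k : ℝ) * α)) = stC α m + c := by
  set f : ℕ → ℝ := fun j => 1 - Int.fract (((j : ℝ) + 1) * α) with hf
  have hinj : Set.InjOn f (Finset.range m) := by
    intro i _ j _ hij
    simp only [hf] at hij
    exact st_fract_inj hirr (by linarith)
  set T : Finset ℝ := (Finset.range m).image f with hT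
  have hTcard : T.card = m := by
    rw [hT, Finset.card_image_of_injOn hinj, Finset.card_range]
  have hTsub : ∀ t ∈ T, t ∈ Set.Ioo (0:ℝ) 1 := by
    intro t ht
    rw [hT, Finset.mem_image] at ht
    obtain ⟨j, _, rfl⟩ := ht
    have h1 := Int.fract_nonneg (((j : ℝ) + 1) * α)
    have h2 := Int.fract_lt_one (((j : ℝ) + 1) * α)
    have h3 := st_fract_ne hirr j
    constructor
    · simp only [hf]; linarith
    · simp only [hf]
      have : 0 < Int.fract (((j : ℝ) + 1) * α) := lt_of_le_of_ne h1 (Ne.symm h3)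
      linarith
  obtain ⟨a, b, ha, hab, hb1, hcnt⟩ := st_count T hTsub c (by omega)
  obtain ⟨k, hk⟩ := st_dense hirr a b ha hb1 hab
  set x : ℝ := Int.fract ((k : ℝ) * α) with hx
  have hx0 : 0 ≤ x := le_trans ha (le_of_lt hk.1)
  have hx1 : x < 1 := lt_of_lt_of_le hk.2 hb1
  refine ⟨k, ?_⟩
  have step1 : stG α m x = stC α m + ∑ j ∈ Finset.range m, (if f j ≤ x then (1:ℤ) else 0) := by
    rw [stG, stC, ← Finset.sum_add_distrib]
    apply Finset.sum_congr rfl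
    intro j _
    rw [st_indicator x hx0 hx1 (((j : ℝ) + 1) * α)]
  have step2 : ∑ j ∈ Finset.range m, (if f j ≤ x then (1:ℤ) else 0)
      = (((Finset.range m).filter (fun j => f j ≤ x)).card : ℤ) := by
    rw [Finset.sum_boole]
  have step3 : ((Finset.range m).filter (fun j => f j ≤ x)).card
      = (T.filter (· ≤ x)).card := by
    rw [hT, Finset.filter_image, Finset.card_image_of_injOn
      (hinj.mono (by intro u hu; exact Finset.mem_coe.2 (Finset.mem_of_mem_filter u (Finset.mem_coe.1 hu))))]
  rw [step1, step2, step3, hcnt x hk]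

lemma st_fsum (h0 : 0 < α) (h1 : α < 1) (m : ℕ) (k : ℤ) (w : Fin m → ℕ)
    (hw : ∀ i : Fin m, w i = mech α (k + (i.val : ℤ))) :
    (fsum m w : ℤ) = stG α m (Int.fract ((k : ℝ) * α)) := by
  rw [fsum, stG]
  push_cast
  apply Finset.sum_congr rfl
  intro j hj
  rw [Finset.mem_range] at hj
  have inner : ∑ i ∈ Finset.range (j + 1), ((if h : i < m then w ⟨i, h⟩ else 0 : ℕ) : ℤ)
      = ∑ i ∈ Finset.range (j + 1), (mech α (k + i) : ℤ) := by
    apply Finset.sum_congr rfl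
    intro i hi
    rw [Finset.mem_range] at hi
    have him : i < m := by omega
    rw [dif_pos him, hw ⟨i, him⟩]
  rw [inner, st_prefix h0 h1 k (j + 1)]
  push_cast
  ring_nf

lemma st_letter (h0 : 0 < α) (h1 : α < 1) (k : ℤ) (i : ℕ) :
    (mech α (k + i) : ℤ) = ⌊Int.fract ((k : ℝ) * α) + ((i : ℝ) + 1) * α⌋
      - ⌊Int.fract ((k : ℝ) * α) + (i : ℝ) * α⌋ := by
  have h1' := st_prefix h0 h1 k (i + 1)
  have h2' := st_prefix h0 h1 k i
  rw [Finset.sum_range_succ, h2'] at h1'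
  push_cast at h1' ⊢
  linarith

lemma st_bounds {m : ℕ} (x : ℝ) (hx0 : 0 ≤ x) (hx1 : x < 1) :
    stC α m ≤ stG α m x ∧ stG α m x ≤ stC α m + m := by
  constructor
  · apply Finset.sum_le_sum
    intro j _
    exact Int.floor_mono (by linarith)
  · rw [stG, stC]
    have heq : (∑ j ∈ Finset.range m, ⌊((j : ℝ) + 1) * α⌋) + (m : ℤ)
        = ∑ j ∈ Finset.range m, (⌊((j : ℝ) + 1) * α⌋ + 1) := by
      rw [Finset.sum_add_distrib]
      simp
    rw [heq]
    apply Finset.sum_le_sum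
    intro j _
    have hle : x + ((j : ℝ) + 1) * α ≤ ((j : ℝ) + 1) * α + 1 := by linarith
    calc ⌊x + ((j : ℝ) + 1) * α⌋ ≤ ⌊((j : ℝ) + 1) * α + 1⌋ := Int.floor_mono hle
      _ = ⌊((j : ℝ) + 1) * α⌋ + 1 := by rw [Int.floor_add_one]

lemma st_inj_aux (h0 : 0 < α) (h1 : α < 1) (m : ℕ) (k1 k2 : ℤ)
    (hle : Int.fract ((k1 : ℝ) * α) ≤ Int.fract ((k2 : ℝ) * α))
    (hG : stG α m (Int.fract ((k1 : ℝ) * α)) = stG α m (Int.fract ((k2 : ℝ) * α))) :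
    ∀ i : ℕ, i < m → mech α (k1 + i) = mech α (k2 + i) := by
  set x1 := Int.fract ((k1 : ℝ) * α) with hx1def
  set x2 := Int.fract ((k2 : ℝ) * α) with hx2def
  have hterm : ∀ j ∈ Finset.range m, ⌊x1 + ((j : ℝ) + 1) * α⌋ = ⌊x2 + ((j : ℝ) + 1) * α⌋ := by
    have hmono : ∀ j ∈ Finset.range m,
        ⌊x1 + ((j : ℝ) + 1) * α⌋ ≤ ⌊x2 + ((j : ℝ) + 1) * α⌋ :=
      fun j _ => Int.floor_mono (by linarith)
    intro j hj
    exact ((Finset.sum_eq_sum_iff_of_le hmono).1 hG j hj)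
  have hfloor : ∀ i : ℕ, i ≤ m → ⌊x1 + (i : ℝ) * α⌋ = ⌊x2 + (i : ℝ) * α⌋ := by
    intro i hi
    rcases Nat.eq_zero_or_pos i with rfl | hpos
    · simp only [Nat.cast_zero, zero_mul, add_zero]
      rw [Int.floor_eq_zero_iff.2 ⟨Int.fract_nonneg _, Int.fract_lt_one _⟩,
        Int.floor_eq_zero_iff.2 ⟨Int.fract_nonneg _, Int.fract_lt_one _⟩]
    · obtain ⟨j, rfl⟩ : ∃ j, i = j + 1 := ⟨i - 1, by omega⟩
      have := hterm j (Finset.mem_range.2 (by omega))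
      push_cast
      convert this using 3
  intro i hi
  have e1 := st_letter h0 h1 k1 i
  have e2 := st_letter h0 h1 k2 i
  have f1 := hfloor i (by omega)
  have f2 := hterm i (Finset.mem_range.2 hi)
  have : (mech α (k1 + i) : ℤ) = (mech α (k2 + i) : ℤ) := by
    rw [e1, e2, f1, f2]
  exact_mod_cast this

lemma st_inj (h0 : 0 < α) (h1 : α < 1) (m : ℕ) (k1 k2 : ℤ)
    (hG : stG α m (Int.fract ((k1 : ℝ) * α)) = stG α m (Int.fract ((k2 : ℝ) * α))) :
    ∀ i : ℕ, i < m → mech α (k1 + i) = mech α (k2 + i) := by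
  rcases le_total (Int.fract ((k1 : ℝ) * α)) (Int.fract ((k2 : ℝ) * α)) with h | h
  · exact st_inj_aux h0 h1 m k1 k2 h hG
  · intro i hi
    exact (st_inj_aux h0 h1 m k2 k1 h hG.symm i hi).symm

end

theorem stmt_16 (α : ℝ) (hα : α ∈ Set.Icc (0 : ℝ) 1) (hirr : Irrational α)
    (m : ℕ) (hm : 1 ≤ m) : complexity (mech α) m = m + 1 := by
  have h0 : 0 < α := by
    rcases lt_or_eq_of_le hα.1 with h | h
    · exact h
    · exact absurd h.symm (by simpa using hirr.ne_int 0)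
  have h1 : α < 1 := by
    rcases lt_or_eq_of_le hα.2 with h | h
    · exact h
    · exact absurd h (by simpa using hirr.ne_int 1)
  have hsel : ∀ c : Fin (m + 1), ∃ k : ℤ,
      stG α m (Int.fract ((k : ℝ) * α)) = stC α m + (c : ℕ) :=
    fun c => st_onto hirr m c (by omega)
  choose K hK using hsel
  set F : Fin (m + 1) → ↥(factorsOf (mech α) m) :=
    fun c => ⟨fun i => mech α (K c + (i.val : ℤ)), ⟨K c, fun i => rfl⟩⟩ with hF
  have hbij : Function.Bijective F := by
    constructor
    · intro c1 c2 hc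
      have hw : (fun i : Fin m => mech α (K c1 + (i.val : ℤ)))
          = (fun i : Fin m => mech α (K c2 + (i.val : ℤ))) := congrArg Subtype.val hc
      have hfs : fsum m (fun i : Fin m => mech α (K c1 + (i.val : ℤ)))
          = fsum m (fun i : Fin m => mech α (K c2 + (i.val : ℤ))) := by rw [hw]
      have e1 := st_fsum h0 h1 m (K c1) _ (fun i => rfl)
      have e2 := st_fsum h0 h1 m (K c2) _ (fun i => rfl)
      have : stC α m + ((c1 : ℕ) : ℤ) = stC α m + ((c2 : ℕ) : ℤ) := by
        rw [← hK c1, ← hK c2, ← e1, ← e2]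
        exact_mod_cast hfs
      have : ((c1 : ℕ) : ℤ) = ((c2 : ℕ) : ℤ) := by omega
      exact Fin.ext (by exact_mod_cast this)
    · rintro ⟨w, k, hwk⟩
      set x : ℝ := Int.fract ((k : ℝ) * α) with hx
      have hx0 : 0 ≤ x := Int.fract_nonneg _
      have hx1 : x < 1 := Int.fract_lt_one _
      obtain ⟨hlo, hhi⟩ := st_bounds (α := α) (m := m) x hx0 hx1
      set c : ℕ := (stG α m x - stC α m).toNat with hc
      have hcm : c ≤ m := by omega
      have hgc : stG α m x = stC α m + (c : ℤ) := by
        rw [hc]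
        omega
      refine ⟨⟨c, by omega⟩, ?_⟩
      apply Subtype.ext
      funext i
      have hGeq : stG α m (Int.fract ((K ⟨c, by omega⟩ : ℝ) * α)) = stG α m x :=
        (hK ⟨c, by omega⟩).trans hgc.symm
      have := st_inj h0 h1 m (K ⟨c, by omega⟩) k hGeq i.val i.isLt
      simp only [hF]
      rw [this, ← hwk i]
  have hcard := Nat.card_eq_of_bijective F hbij
  rw [Nat.card_eq_fintype_card, Fintype.card_fin] at hcard
  rw [complexity, ← hcard]
end

section
/- For distinct α, β ∈ F_m, the sets of length-m factors of the mechanical words ω_α and ω_β differ: Dic(ω_α) ∩ {0,1}^m ≠ Dic(ω_β) ∩ {0,1}^m. -/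
/-- `r` is an `m`-Farey number: a rational in `[0,1]` whose (reduced) denominator is at most `m`. -/
def memFarey (m : ℕ) (r : ℚ) : Prop := 0 ≤ r ∧ r ≤ 1 ∧ r.den ≤ m

/-- `mech a n` as a floor difference. -/
lemma mech_floor (a : ℝ) (h0 : 0 ≤ a) (h1 : a ≤ 1) (n : ℤ) :
    (mech a n : ℤ) = ⌊((n : ℝ) + 1) * a⌋ - ⌊(n : ℝ) * a⌋ := by
  have hfr0 := Int.fract_nonneg ((n : ℝ) * a)
  have hfr1 := Int.fract_lt_one ((n : ℝ) * a)
  have hsplit : ((n : ℝ) + 1) * a = (⌊(n : ℝ) * a⌋ : ℝ) + (Int.fract ((n : ℝ) * a) + a) := by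
    have h := Int.floor_add_fract ((n : ℝ) * a)
    nlinarith [h]
  rw [hsplit, Int.floor_intCast_add]
  unfold mech
  by_cases hc : Int.fract ((n : ℝ) * a) ∈ Set.Ico (1 - a) 1
  · rw [if_pos hc]
    have h1' : ⌊Int.fract ((n : ℝ) * a) + a⌋ = 1 := by
      apply Int.floor_eq_iff.mpr
      constructor
      · push_cast; linarith [hc.1]
      · push_cast; linarith
    omega
  · rw [if_neg hc]
    simp only [Set.mem_Ico, not_and, not_lt] at hc
    have hlt : Int.fract ((n : ℝ) * a) < 1 - a := by
      by_contra hge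
      push_neg at hge
      exact absurd (hc hge) (not_le.mpr hfr1)
    have h0' : ⌊Int.fract ((n : ℝ) * a) + a⌋ = 0 := by
      apply Int.floor_eq_iff.mpr
      constructor
      · push_cast; linarith
      · push_cast; linarith
    omega

/-- Window sums as floor differences. -/
lemma mech_sum (a : ℝ) (h0 : 0 ≤ a) (h1 : a ≤ 1) (n : ℤ) (k : ℕ) :
    (∑ i ∈ Finset.range k, (mech a (n + i) : ℤ)) = ⌊((n : ℝ) + k) * a⌋ - ⌊(n : ℝ) * a⌋ := by
  induction k with
  | zero => simp
  | succ k ih =>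
    rw [Finset.sum_range_succ, ih, mech_floor a h0 h1 (n + k)]
    have e1 : ((↑(n + (k:ℤ)) : ℝ) + 1) * a = ((n : ℝ) + (↑(k+1) : ℝ)) * a := by push_cast; ring
    have e2 : ((↑(n + (k:ℤ)) : ℝ)) * a = ((n : ℝ) + (k : ℝ)) * a := by push_cast; ring
    rw [e1, e2]
    push_cast
    ring

lemma den_mul_cast (a : ℚ) : ((a.den : ℝ)) * (a : ℝ) = ((a.num : ℤ) : ℝ) := by
  have h : ((a.den : ℚ)) * a = ((a.num : ℚ)) := by
    rw [mul_comm]; exact_mod_cast Rat.mul_den_eq_num a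
  exact_mod_cast congrArg (fun x : ℚ => (x : ℝ)) h

/-- `mech` of a rational is periodic with period the denominator (any multiple). -/
lemma mech_add_mul_den (a : ℚ) (n k : ℤ) :
    mech (a : ℝ) (n + k * a.den) = mech (a : ℝ) n := by
  have h : ((n + k * a.den : ℤ) : ℝ) * a = (n : ℝ) * a + ((k * a.num : ℤ) : ℝ) := by
    push_cast
    have hdm := den_mul_cast a
    push_cast at hdm
    rw [← hdm]
    ring
  unfold mech
  rw [h, Int.fract_add_intCast]

/-- Shifted floor by denominator. -/
lemma floor_add_den (a : ℚ) (n : ℤ) :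
    ⌊((n : ℝ) + (a.den : ℝ)) * (a : ℝ)⌋ = ⌊(n : ℝ) * (a : ℝ)⌋ + a.num := by
  have h : ((n : ℝ) + (a.den : ℝ)) * (a : ℝ) = (n : ℝ) * a + ((a.num : ℤ) : ℝ) := by
    have hdm := den_mul_cast a
    push_cast at hdm ⊢
    rw [← hdm]
    ring
  rw [h, Int.floor_add_intCast]

/-- any period of `mech a` is a multiple of the denominator. -/
lemma period_dvd (a : ℚ) (h0 : 0 ≤ a) (h1 : a ≤ 1) (d : ℕ) (hd : 0 < d)
    (hper : ∀ n : ℤ, mech (a : ℝ) (n + (d : ℤ)) = mech (a : ℝ) n) : a.den ∣ d := by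
  have h0' : (0 : ℝ) ≤ (a : ℝ) := by exact_mod_cast h0
  have h1' : (a : ℝ) ≤ 1 := by exact_mod_cast h1
  set c : ℤ := ⌊(d : ℝ) * (a : ℝ)⌋ with hc
  have hu : ∀ n : ℤ, ⌊((n : ℝ) + (d : ℝ)) * a⌋ - ⌊(n : ℝ) * a⌋ = c := by
    have step : ∀ n : ℤ, ⌊(((n : ℝ) + 1) + (d : ℝ)) * a⌋ - ⌊((n : ℝ) + 1) * a⌋
        = ⌊((n : ℝ) + (d : ℝ)) * a⌋ - ⌊(n : ℝ) * a⌋ := by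
      intro n
      have e1 := mech_floor (a : ℝ) h0' h1' (n + d)
      have e2 := mech_floor (a : ℝ) h0' h1' n
      have e3 : (mech (a : ℝ) (n + d) : ℤ) = mech (a : ℝ) n := by rw [hper n]
      have c1 : ((↑(n + (d:ℤ)) : ℝ) + 1) * a = (((n:ℝ) + 1) + (d:ℝ)) * a := by push_cast; ring
      have c2 : ((↑(n + (d:ℤ)) : ℝ)) * a = ((n:ℝ) + (d:ℝ)) * a := by push_cast; ring
      rw [c1, c2] at e1
      omega
    intro n
    induction n using Int.induction_on with
    | zero => simp [hc]
    | succ k ih =>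
      have hs := step k
      push_cast at hs ih ⊢
      omega
    | pred k ih =>
      have hs := step (-(k:ℤ) - 1)
      push_cast at hs ih ⊢
      ring_nf at hs ih ⊢
      omega
  have hmul : ∀ k : ℕ, ⌊(((k * d : ℕ)) : ℝ) * (a : ℝ)⌋ = k * c := by
    intro k
    induction k with
    | zero => simp
    | succ k ih =>
      have := hu ((k * d : ℕ) : ℤ)
      have ce : ((↑((k+1) * d : ℕ)) : ℝ) = ((((k * d : ℕ) : ℤ)) : ℝ) + (d : ℝ) := by
        push_cast; ring
      rw [ce]
      have ce2 : (((k * d : ℕ) : ℤ) : ℝ) = (((k * d : ℕ)) : ℝ) := by push_cast; ring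
      rw [ce2] at this ⊢
      rw [show (((k+1 : ℕ)) : ℤ) * c = (k : ℤ) * c + c by push_cast; ring]
      linarith [this, ih]
  have hkey : (d : ℤ) * a.num = (a.den : ℤ) * c := by
    have := hmul a.den
    have ce : (((a.den * d : ℕ)) : ℝ) * (a : ℝ) = (d : ℝ) * ((a.den : ℝ) * (a : ℝ)) := by
      push_cast; ring
    rw [ce, den_mul_cast a] at this
    have : ⌊((d : ℝ)) * ((a.num : ℤ) : ℝ)⌋ = (a.den : ℤ) * c := this
    rw [show ((d : ℝ)) * ((a.num : ℤ) : ℝ) = (((d * a.num : ℤ)) : ℝ) by push_cast; ring,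
      Int.floor_intCast] at this
    exact this
  have hc0 : 0 ≤ c := by
    apply Int.floor_nonneg.mpr
    positivity
  have hp0 : 0 ≤ a.num := Rat.num_nonneg.mpr h0
  have hnat : d * a.num.natAbs = a.den * c.toNat := by
    have e1 : (a.num.natAbs : ℤ) = a.num := Int.natAbs_of_nonneg hp0
    have e2 : (c.toNat : ℤ) = c := Int.toNat_of_nonneg hc0
    have h3 : (d : ℤ) * (a.num.natAbs : ℤ) = (a.den : ℤ) * (c.toNat : ℤ) := by
      rw [e1, e2]; exact hkey
    exact_mod_cast h3
  have hdvd : a.den ∣ d * a.num.natAbs := ⟨c.toNat, hnat⟩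
  exact (Nat.Coprime.dvd_of_dvd_mul_right (a.reduced.symm) hdvd)

/-- The window of length `m` starting at `n`. -/
noncomputable def win (a : ℚ) (m : ℕ) (n : ℤ) : Fin m → ℕ := fun i => mech (a : ℝ) (n + i.val)

lemma mech_mod (a : ℚ) (n : ℤ) : mech (a : ℝ) n = mech (a : ℝ) (n % a.den) := by
  conv_lhs => rw [← Int.emod_add_ediv_mul n (a.den : ℤ)]
  exact mech_add_mul_den a (n % a.den) (n / a.den)

lemma factors_eq (a : ℚ) (m : ℕ) :
    factorsOf (mech (a : ℝ)) m
      = ↑((Finset.range a.den).image (fun n : ℕ => win a m (n : ℤ))) := by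
  ext w
  simp only [factorsOf, Set.mem_setOf_eq, Finset.coe_image, Finset.coe_range, Set.mem_image,
    Set.mem_Iio]
  constructor
  · rintro ⟨n, hn⟩
    have hq : (0 : ℤ) < (a.den : ℤ) := by exact_mod_cast a.pos
    have hm0 : 0 ≤ n % (a.den : ℤ) := Int.emod_nonneg n (by omega)
    have hmlt : n % (a.den : ℤ) < (a.den : ℤ) := Int.emod_lt_of_pos n hq
    refine ⟨(n % (a.den : ℤ)).toNat, ?_, ?_⟩
    · omega
    · funext i
      rw [hn i]
      have key : mech (a : ℝ) (n + i.val) = mech (a : ℝ) ((((n % (a.den : ℤ)).toNat : ℤ)) + i.val) := by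
        rw [Int.toNat_of_nonneg hm0]
        conv_lhs => rw [show n + (i.val : ℤ) = (n % (a.den : ℤ) + i.val) + (n / a.den) * a.den by
          have := Int.emod_add_ediv_mul n (a.den : ℤ); linarith]
        exact mech_add_mul_den a _ _
      exact key.symm
  · rintro ⟨n, _, rfl⟩
    exact ⟨(n : ℤ), fun i => rfl⟩

lemma win_injOn (a : ℚ) (m : ℕ) (h0 : 0 ≤ a) (h1 : a ≤ 1) (hqm : a.den ≤ m) :
    ∀ x ∈ Finset.range a.den, ∀ y ∈ Finset.range a.den,
      win a m (x : ℤ) = win a m (y : ℤ) → x = y := by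
  have key : ∀ x y : ℕ, x < a.den → y < a.den → x < y → win a m (x : ℤ) ≠ win a m (y : ℤ) := by
    intro x y hx hy hlt heq
    set d : ℕ := y - x with hdflt
    have hd0 : 0 < d := by omega
    have hdlt : d < a.den := by omega
    have hper : ∀ n : ℤ, mech (a : ℝ) (n + (d : ℤ)) = mech (a : ℝ) n := by
      intro n
      have hq : (0 : ℤ) < (a.den : ℤ) := by exact_mod_cast a.pos
      set r : ℤ := (n - x) % (a.den : ℤ) with hr
      have hr0 : 0 ≤ r := Int.emod_nonneg _ (by omega)
      have hrlt : r < (a.den : ℤ) := Int.emod_lt_of_pos _ hq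
      have hdecomp := Int.emod_add_ediv_mul (n - (x : ℤ)) (a.den : ℤ)
      set k : ℤ := (n - (x : ℤ)) / (a.den : ℤ) with hk
      have hn1 : n = ((x : ℤ) + r) + k * a.den := by linarith
      have hn2 : n + (d : ℤ) = ((y : ℤ) + r) + k * a.den := by
        have : (y : ℤ) = (x : ℤ) + d := by push_cast; omega
        linarith
      rw [hn1]
      conv_lhs => rw [← hn1, hn2]
      rw [mech_add_mul_den, mech_add_mul_den]
      -- mech (y + r) = mech (x + r)
      have hi : r.toNat < m := by omega
      have hwi : win a m (x : ℤ) ⟨r.toNat, hi⟩ = win a m (y : ℤ) ⟨r.toNat, hi⟩ := by rw [heq]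
      unfold win at hwi
      simp only at hwi
      rw [Int.toNat_of_nonneg hr0] at hwi
      omega
    have hdvd := period_dvd a h0 h1 d hd0 hper
    have := Nat.le_of_dvd hd0 hdvd
    omega
  intro x hx y hy hxy
  simp only [Finset.mem_range] at hx hy
  rcases lt_trichotomy x y with h | h | h
  · exact absurd hxy (key x y hx hy h)
  · exact h
  · exact absurd hxy.symm (key y x hy hx h)

lemma sum_block (a : ℚ) (h0 : 0 ≤ a) (h1 : a ≤ 1) (n : ℤ) :
    ∑ i ∈ Finset.range a.den, (mech (a : ℝ) (n + i) : ℤ) = a.num := by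
  have h0' : (0 : ℝ) ≤ (a : ℝ) := by exact_mod_cast h0
  have h1' : (a : ℝ) ≤ 1 := by exact_mod_cast h1
  rw [mech_sum (a : ℝ) h0' h1' n a.den, floor_add_den a n]
  ring

lemma sum_windows (a : ℚ) (h0 : 0 ≤ a) (h1 : a ≤ 1) (M : ℕ) :
    ∑ n ∈ Finset.range a.den, ∑ i ∈ Finset.range M, (mech (a : ℝ) ((n : ℤ) + i) : ℤ)
      = (M : ℤ) * a.num := by
  induction M with
  | zero => simp
  | succ M ih =>
    have hrow : ∑ n ∈ Finset.range a.den, (mech (a : ℝ) ((n : ℤ) + M) : ℤ) = a.num := by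
      rw [← sum_block a h0 h1 (M : ℤ)]
      exact Finset.sum_congr rfl fun i _ => by rw [add_comm]
    calc ∑ n ∈ Finset.range a.den, ∑ i ∈ Finset.range (M + 1), (mech (a : ℝ) ((n : ℤ) + i) : ℤ)
        = ∑ n ∈ Finset.range a.den,
            ((∑ i ∈ Finset.range M, (mech (a : ℝ) ((n : ℤ) + i) : ℤ))
              + (mech (a : ℝ) ((n : ℤ) + M) : ℤ)) := by
          exact Finset.sum_congr rfl fun n _ => Finset.sum_range_succ _ M
      _ = (M : ℤ) * a.num + a.num := by rw [Finset.sum_add_distrib, ih, hrow]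
      _ = ((M + 1 : ℕ) : ℤ) * a.num := by push_cast; ring

lemma card_factors (a : ℚ) (m : ℕ) (h0 : 0 ≤ a) (h1 : a ≤ 1) (hqm : a.den ≤ m) :
    ((Finset.range a.den).image (fun n : ℕ => win a m (n : ℤ))).card = a.den := by
  rw [Finset.card_image_of_injOn (fun x hx y hy h => win_injOn a m h0 h1 hqm x hx y hy h),
    Finset.card_range]

lemma sum_factors (a : ℚ) (m : ℕ) (h0 : 0 ≤ a) (h1 : a ≤ 1) (hqm : a.den ≤ m) :
    ∑ w ∈ (Finset.range a.den).image (fun n : ℕ => win a m (n : ℤ)),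
      ∑ i : Fin m, (w i : ℤ) = (m : ℤ) * a.num := by
  rw [Finset.sum_image (win_injOn a m h0 h1 hqm)]
  rw [← sum_windows a h0 h1 m]
  refine Finset.sum_congr rfl fun n _ => ?_
  exact Fin.sum_univ_eq_sum_range (fun j => ((mech (a : ℝ) ((n : ℤ) + j) : ℕ) : ℤ)) m

theorem stmt_17 (m : ℕ) (hm : 1 ≤ m) (α β : ℚ) (hα : memFarey m α) (hβ : memFarey m β)
    (hne : α ≠ β) :
    factorsOf (mech (α : ℝ)) m ≠ factorsOf (mech (β : ℝ)) m := by
  intro heq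
  obtain ⟨hα0, hα1, hαm⟩ := hα
  obtain ⟨hβ0, hβ1, hβm⟩ := hβ
  rw [factors_eq α m, factors_eq β m] at heq
  have hfin : (Finset.range α.den).image (fun n : ℕ => win α m (n : ℤ))
      = (Finset.range β.den).image (fun n : ℕ => win β m (n : ℤ)) :=
    Finset.coe_injective heq
  have hden : α.den = β.den := by
    have hc := congrArg Finset.card hfin
    rwa [card_factors α m hα0 hα1 hαm, card_factors β m hβ0 hβ1 hβm] at hc
  have hnum : α.num = β.num := by
    have hs := congrArg (fun s => ∑ w ∈ s, ∑ i : Fin m, ((w i : ℕ) : ℤ)) hfin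
    rw [sum_factors α m hα0 hα1 hαm, sum_factors β m hβ0 hβ1 hβm] at hs
    have hm' : (m : ℤ) ≠ 0 := Int.natCast_ne_zero.mpr (by omega)
    exact mul_left_cancel₀ hm' hs
  exact hne (Rat.ext hnum hden)
end

section
/- Let r = p/q ∈ (0,1) be rational in lowest terms with short continued fraction c_s(r) = [0, a_0, …, a_n + 1] and long continued fraction c_l(r) = [0, a_0, …, a_n, 1]. Define words recursively by s_{-1} = 1, s_0 = 0, s_1 = s_0^{a_1 - 1} s_{-1}, s_k = s_{k-1}^{a_k} s_{k-2}. Then the words s_n built from c_s(r) and s_{n+1} built from c_l(r) both have length q. -/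
/-- Evaluation of a finite continued fraction `[a_0; a_1, …, a_n]`,
i.e. `a_0 + 1/(a_1 + 1/(⋯ + 1/a_n))`. -/
def cfEval : List ℕ → ℚ
  | [] => 0
  | [a] => (a : ℚ)
  | a :: b :: rest => (a : ℚ) + 1 / cfEval (b :: rest)

/-- `m`-fold concatenation of a word. -/
def wpow (w : List ℕ) : ℕ → List ℕ
  | 0 => []
  | k + 1 => w ++ wpow w k

/-- The words `s_{-1} = 1`, `s_0 = 0`, `s_1 = s_0^{a_1-1} s_{-1}`,
`s_k = s_{k-1}^{a_k} s_{k-2}` associated with coefficients `a`, with the index shifted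
by one: `sW a k = s_{k-1}`. -/
def sW (a : ℕ → ℕ) : ℕ → List ℕ
  | 0 => [1]
  | 1 => [0]
  | 2 => wpow [0] (a 1 - 1) ++ [1]
  | (k + 3) => wpow (sW a (k + 2)) (a (k + 2)) ++ sW a (k + 1)

/-- Continuant (numerator of a continued fraction). -/
def K : List ℕ → ℕ
  | [] => 1
  | [a] => a
  | a :: b :: rest => a * K (b :: rest) + K rest

lemma K_pos : ∀ l : List ℕ, (∀ x ∈ l, 1 ≤ x) → 0 < K l
  | [], _ => by simp [K]
  | [a], h => by simp only [K]; exact h a (by simp)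
  | a :: b :: rest, h => by
    have h1 := K_pos (b :: rest) (fun x hx => h x (by simp [hx]))
    have ha := h a (by simp)
    simp only [K]
    positivity

lemma cf_eq : ∀ l : List ℕ, l ≠ [] → (∀ x ∈ l, 1 ≤ x) →
    cfEval l = (K l : ℚ) / (K l.tail) ∧ Nat.Coprime (K l) (K l.tail)
  | [], h, _ => absurd rfl h
  | [a], _, _ => by simp [cfEval, K, Nat.coprime_one_right]
  | a :: b :: rest, _, h => by
    have hb : (b :: rest) ≠ [] := by simp
    have hmem : ∀ x ∈ b :: rest, 1 ≤ x := fun x hx => h x (by simp [hx])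
    obtain ⟨heq, hcop⟩ := cf_eq (b :: rest) hb hmem
    have hpos : 0 < K (b :: rest) := K_pos _ hmem
    have hpos' : (0 : ℚ) < (K (b :: rest) : ℚ) := by exact_mod_cast hpos
    constructor
    · show (a : ℚ) + 1 / cfEval (b :: rest) = _
      rw [heq]
      show _ = ((a * K (b :: rest) + K rest : ℕ) : ℚ) / (K (b :: rest) : ℚ)
      have hpos2 : 0 < K ((b :: rest) : List ℕ).tail := K_pos _ (fun x hx => hmem x (List.mem_of_mem_tail hx))
      have hpos2' : (0 : ℚ) < ((K (List.tail (b :: rest)) : ℕ) : ℚ) := by exact_mod_cast hpos2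
      push_cast
      rw [one_div_div]
      field_simp
      rfl
    · show Nat.Coprime (a * K (b :: rest) + K rest) (K (b :: rest))
      have h2 : Nat.Coprime (K rest) (K (b :: rest)) := by
        simpa [Nat.coprime_comm] using hcop
      have := (Nat.coprime_add_mul_right_left (K rest) (K (b :: rest)) a).mpr h2
      simpa [Nat.add_comm] using this

lemma K_append : ∀ (l : List ℕ), l ≠ [] → ∀ x, K (l ++ [x]) = x * K l + K l.dropLast
  | [a], _, x => by simp [K]; ring
  | [a, b], _, x => by simp [K]; ring
  | a :: b :: c :: rest, _, x => by
    have h1 := K_append (b :: c :: rest) (by simp) x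
    have h2 := K_append (c :: rest) (by simp) x
    show K (a :: b :: (c :: rest ++ [x])) = _
    rw [show K (a :: b :: (c :: rest ++ [x]))
        = a * K (b :: (c :: rest ++ [x])) + K (c :: rest ++ [x]) from rfl]
    rw [show (b :: (c :: rest ++ [x])) = (b :: c :: rest) ++ [x] from rfl, h1, h2]
    simp only [List.dropLast]
    rw [show K (a :: b :: c :: rest) = a * K (b :: c :: rest) + K (c :: rest) from rfl]
    rcases h3 : (c :: rest).dropLast with _ | ⟨d, l'⟩
    · simp [K]; ring
    · rw [show K (a :: b :: d :: l') = a * K (b :: d :: l') + K (d :: l') from rfl]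
      ring

lemma dropLast_reverse' (l : List ℕ) : l.reverse.dropLast = l.tail.reverse := by
  have := List.tail_reverse (l := l.reverse)
  simpa using this.symm

lemma K_reverse : ∀ l : List ℕ, K l.reverse = K l
  | [] => rfl
  | [a] => rfl
  | a :: b :: rest => by
    have h1 := K_reverse (b :: rest)
    have h2 := K_reverse rest
    rw [show (a :: b :: rest).reverse = (b :: rest).reverse ++ [a] by simp]
    rw [K_append _ (by simp) a, dropLast_reverse', h1]
    simp only [List.tail_cons, h2]
    rfl

/-- The list `[b k, b (k-1), …, b 1]`. -/
def Lr (b : ℕ → ℕ) : ℕ → List ℕ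
  | 0 => []
  | k + 1 => b (k + 1) :: Lr b k

lemma wpow_length (w : List ℕ) : ∀ m, (wpow w m).length = m * w.length
  | 0 => by simp [wpow]
  | m + 1 => by simp [wpow, wpow_length w m]; ring

lemma sW_length (b : ℕ → ℕ) (hb1 : 1 ≤ b 1) : ∀ k, (sW b (k + 1)).length = K (Lr b k)
  | 0 => by simp [sW, Lr, K]
  | 1 => by
    show (wpow [0] (b 1 - 1) ++ [1]).length = K [b 1]
    simp [wpow_length, K]
    omega
  | (k + 2) => by
    show (wpow (sW b (k + 2)) (b (k + 2)) ++ sW b (k + 1)).length = _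
    rw [List.length_append, wpow_length, sW_length b hb1 (k + 1), sW_length b hb1 k]
    show _ = K (b (k+2) :: b (k+1) :: Lr b k)
    simp [Lr, K]

lemma Lr_reverse (b : ℕ → ℕ) : ∀ k, (Lr b k).reverse = List.ofFn (fun i : Fin k => b (i + 1))
  | 0 => by simp [Lr]
  | k + 1 => by
    rw [List.ofFn_succ']
    simp [Lr, Lr_reverse b k]

lemma Lr_mem (b : ℕ → ℕ) : ∀ k, (∀ i, 1 ≤ i → i ≤ k → 1 ≤ b i) → ∀ x ∈ Lr b k, 1 ≤ x
  | 0, _ => by simp [Lr]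
  | k + 1, h => by
    intro x hx
    simp only [Lr, List.mem_cons] at hx
    rcases hx with rfl | hx
    · exact h _ (by omega) le_rfl
    · exact Lr_mem b k (fun i h1 h2 => h i h1 (by omega)) x hx

lemma den_eq (r : ℚ) (b : ℕ → ℕ) (k : ℕ) (hk : 1 ≤ k)
    (hb : ∀ i, 1 ≤ i → i ≤ k → 1 ≤ b i)
    (hr : r = cfEval (0 :: (Lr b k).reverse)) : r.den = K (Lr b k) := by
  have hmem : ∀ x ∈ (Lr b k).reverse, 1 ≤ x := by
    intro x hx; exact Lr_mem b k hb x (List.mem_reverse.mp hx)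
  have hne : (Lr b k).reverse ≠ [] := by
    cases k with
    | zero => omega
    | succ m => simp [Lr]
  obtain ⟨heq, hcop⟩ := cf_eq _ hne hmem
  have hKpos : 0 < K (Lr b k).reverse := K_pos _ hmem
  have hKpos' : (0:ℚ) < (K (Lr b k).reverse : ℚ) := by exact_mod_cast hKpos
  obtain ⟨c, rest, hcr⟩ : ∃ c rest, (Lr b k).reverse = c :: rest := by
    cases h : (Lr b k).reverse with
    | nil => exact absurd h hne
    | cons c rest => exact ⟨c, rest, rfl⟩
  have hr2 : r = (K ((Lr b k).reverse).tail : ℚ) / (K (Lr b k).reverse : ℚ) := by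
    rw [hr, hcr]
    show (0 : ℚ) + 1 / cfEval (c :: rest) = _
    rw [← hcr, heq, zero_add, one_div_div]
  have := Rat.den_div_eq_of_coprime (a := (K ((Lr b k).reverse).tail : ℤ))
    (b := (K (Lr b k).reverse : ℤ)) (by exact_mod_cast hKpos)
    (by simpa using hcop.symm)
  rw [hr2]
  have hrw : ((K ((Lr b k).reverse).tail : ℤ) : ℚ) / ((K (Lr b k).reverse : ℤ) : ℚ)
      = (K ((Lr b k).reverse).tail : ℚ) / (K (Lr b k).reverse : ℚ) := by push_cast; ring
  rw [← hrw]
  have h4 : ((K (Lr b k).reverse.tail : ℤ) : ℚ) / ((K (Lr b k).reverse : ℤ) : ℚ)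
      = ((K (Lr b k).reverse.tail : ℤ) / (K (Lr b k).reverse : ℤ) : ℚ) := by push_cast; ring
  rw [← K_reverse (Lr b k)]
  exact_mod_cast this

theorem stmt_18 (r : ℚ) (h0 : 0 < r) (h1 : r < 1) (n : ℕ) (hn : 1 ≤ n) (a : ℕ → ℕ)
    (ha0 : a 0 = 0) (hai : ∀ i, 1 ≤ i → i ≤ n → 1 ≤ a i)
    (hshort : r = cfEval (List.ofFn (fun i : Fin n => a i) ++ [a n + 1]))
    (hlong : r = cfEval (List.ofFn (fun i : Fin (n + 1) => a i) ++ [1])) :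
    (sW (fun i => if i = n then a n + 1 else a i) (n + 1)).length = r.den ∧
    (sW (fun i => if i = n + 1 then 1 else a i) (n + 2)).length = r.den := by
  obtain ⟨m, rfl⟩ : ∃ m, n = m + 1 := ⟨n - 1, by omega⟩
  set n := m + 1 with hn_def
  set a' : ℕ → ℕ := fun i => if i = n then a n + 1 else a i with ha'
  set a'' : ℕ → ℕ := fun i => if i = n + 1 then 1 else a i with ha''
  have ha1 := hai 1 le_rfl hn
  have ha'1 : 1 ≤ a' 1 := by simp only [ha']; split <;> omega
  have ha''1 : 1 ≤ a'' 1 := by simp only [ha'']; split <;> omega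
  have hb' : ∀ i, 1 ≤ i → i ≤ n → 1 ≤ a' i := by
    intro i h1 h2
    simp only [ha']; split <;> [omega; exact hai i h1 h2]
  have hb'' : ∀ i, 1 ≤ i → i ≤ n + 1 → 1 ≤ a'' i := by
    intro i h1 h2
    simp only [ha'']; split
    · omega
    · exact hai i h1 (by omega)
  -- list identification for the short fraction
  have hlist' : (0 : ℕ) :: (Lr a' n).reverse
      = List.ofFn (fun i : Fin n => a i) ++ [a n + 1] := by
    rw [Lr_reverse, List.ofFn_succ', List.ofFn_succ]
    simp only [Fin.val_last, Fin.coe_castSucc, Fin.val_succ, Fin.val_zero]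
    have e1 : a' (m + 1) = a n + 1 := by simp [ha', hn_def]
    have e2 : (fun i : Fin m => a' (i.1 + 1)) = fun i : Fin m => a (i.1 + 1) := by
      funext i
      have := i.isLt
      simp only [ha']
      rw [if_neg (by omega)]
    rw [e1, e2, ha0]
    simp [List.concat_eq_append]
  -- list identification for the long fraction
  have hlist'' : (0 : ℕ) :: (Lr a'' (n + 1)).reverse
      = List.ofFn (fun i : Fin (n + 1) => a i) ++ [1] := by
    rw [Lr_reverse, List.ofFn_succ' (f := fun i : Fin (n + 1) => a'' (i.1 + 1)),
      List.ofFn_succ (f := fun i : Fin (n + 1) => a i.1)]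
    simp only [Fin.val_last, Fin.coe_castSucc, Fin.val_succ, Fin.val_zero]
    have e1 : a'' (n + 1) = 1 := by simp [ha'']
    have e2 : (fun i : Fin n => a'' (i.1 + 1)) = fun i : Fin n => a (i.1 + 1) := by
      funext i
      have := i.isLt
      simp only [ha'']
      rw [if_neg (by omega)]
    rw [e1, e2, ha0]
    simp [List.concat_eq_append]
  constructor
  · rw [sW_length a' ha'1 n, den_eq r a' n hn hb' (by rw [hlist']; exact_mod_cast hshort)]
  · rw [sW_length a'' ha''1 (n + 1),
      den_eq r a'' (n + 1) (by omega) hb'' (by rw [hlist'']; exact_mod_cast hlong)]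
end
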